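/- For every m ≥ 1, the graph mK₂ (the disjoint union of m independent edges, i.e., a perfect matching on 2m vertices) is a permutation graph, and its threshold dimension equals m: there exist m threshold graphs whose edge sets have union E(mK₂), and no family of fewer than m threshold graphs has edge-set union equal to E(mK₂). -/

import Mathlib

/-!
Numbering the vertex `(a, b)` of `mK₂` as `2a + b`, it becomes the permutation graph of the
involution exchanging `2a` and `2a + 1`: with `x = a - c` and `y = b - d`, the defining product
is `(2x + y)(2x - y)`, which is negative only for `x = 0`, `y ≠ 0`.

Each edge `uv` alone is a threshold graph (weight `1` on `u` and `v`, threshold `1`), which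
gives `m` threshold graphs. Conversely, if a threshold graph with weights `w` and threshold `t`
had two edges `uv`, `xy` but neither `ux` nor `vy`, then
`w u + w v + w x + w y` would be both `> 2t` and `≤ 2t`. So a threshold subgraph of `mK₂`
holds at most one of its edges, and `m` of them are needed.
-/

/-- The permutation graph `G[Π]` on `Fin n`: `i ~ j` iff `(i-j)(Π⁻¹ i - Π⁻¹ j) < 0`. -/
def permGraph (n : ℕ) (π : Equiv.Perm (Fin n)) : SimpleGraph (Fin n) where
  Adj i j := ((i : ℤ) - (j : ℤ)) * ((π.symm i : ℤ) - ((π.symm j : ℤ))) < 0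
  symm := by
    constructor; intro i j h
    have e : ((j : ℤ) - (i : ℤ)) * ((π.symm j : ℤ) - (π.symm i : ℤ))
        = ((i : ℤ) - (j : ℤ)) * ((π.symm i : ℤ) - (π.symm j : ℤ)) := by ring
    simp only [e]
    exact h
  loopless := by constructor; intro i; simp

/-- A set of vertices is stable (independent) if no two of its members are adjacent. -/
def IsStableSet {V : Type*} (G : SimpleGraph V) (s : Set V) : Prop :=
  s.Pairwise fun a b => ¬ G.Adj a b

/-- A finite graph is a threshold graph if there are nonnegative vertex weights and a
threshold `t` such that a set of vertices is stable iff its total weight is at most `t`. -/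
def IsThresholdGraph {V : Type*} [Fintype V] (G : SimpleGraph V) : Prop :=
  ∃ (w : V → ℝ) (t : ℝ), (∀ v, 0 ≤ w v) ∧
    ∀ U : Finset V, ((∑ v ∈ U, w v) ≤ t ↔ IsStableSet G ↑U)

/-- A graph is a permutation graph if it is isomorphic to `permGraph n π` for some
permutation `π` of `Fin n`. -/
def IsPermutationGraph {V : Type*} (G : SimpleGraph V) : Prop :=
  ∃ (n : ℕ) (π : Equiv.Perm (Fin n)), Nonempty (G ≃g permGraph n π)

/-- The threshold dimension of `G`: the least `k` such that the edge set of `G` is the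
union of the edge sets of `k` threshold graphs on `V(G)`. -/
noncomputable def thresholdDim {V : Type*} [Fintype V] (G : SimpleGraph V) : ℕ :=
  sInf {k | ∃ T : Fin k → SimpleGraph V,
    (∀ i, IsThresholdGraph (T i)) ∧ (⋃ i, (T i).edgeSet) = G.edgeSet}

/-- The independence number `α(G)`. -/
noncomputable def alphaNum {V : Type*} [Fintype V] (G : SimpleGraph V) : ℕ :=
  sSup {k | ∃ s : Finset V, s.card = k ∧ IsStableSet G ↑s}

/-- The graph `mK₂`: a perfect matching on `2m` vertices. -/
def matchingGraph (m : ℕ) : SimpleGraph (Fin m × Bool) where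
  Adj a b := a.1 = b.1 ∧ a.2 ≠ b.2
  symm := by constructor; rintro a b ⟨h1, h2⟩; exact ⟨h1.symm, h2.symm⟩
  loopless := by constructor; rintro a ⟨h1, h2⟩; exact h2 rfl


namespace SimpleGraph

variable {V : Type*}

lemma isStableSet_pair_iff (G : SimpleGraph V) {a b : V} (hab : a ≠ b) :
    IsStableSet G {a, b} ↔ ¬ G.Adj a b := by
  simp [IsStableSet, Set.pairwise_pair, hab, G.adj_comm b a]

end SimpleGraph

section Threshold

variable {V : Type*} [Fintype V]

lemma isThresholdGraph_edge [DecidableEq V] (s t : V) :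
    IsThresholdGraph (SimpleGraph.edge s t) := by
  refine ⟨fun v => if v = s ∨ v = t then 1 else 0, 1, fun v => by positivity, fun U => ?_⟩
  rw [Finset.sum_boole, Nat.cast_le_one, Finset.card_le_one]
  simp only [Finset.mem_filter, IsStableSet, Set.Pairwise, Finset.mem_coe, SimpleGraph.edge_adj]
  grind

lemma IsThresholdGraph.adj_or_adj {G : SimpleGraph V} (hG : IsThresholdGraph G)
    {u v x y : V} (huv : G.Adj u v) (hxy : G.Adj x y) (hux : u ≠ x) (hvy : v ≠ y) :
    G.Adj u x ∨ G.Adj v y := by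
  classical
  obtain ⟨w, t, -, hw⟩ := hG
  have pair_le_iff {a b : V} (hab : a ≠ b) : w a + w b ≤ t ↔ ¬ G.Adj a b := by
    rw [← Finset.sum_pair hab, hw, Finset.coe_pair, G.isStableSet_pair_iff hab]
  by_contra! h
  have := (pair_le_iff hux).2 h.1
  have := (pair_le_iff hvy).2 h.2
  have := (pair_le_iff huv.ne).not_left.2 huv
  have := (pair_le_iff hxy.ne).not_left.2 hxy
  linarith

def IsThresholdCover {k : ℕ} (G : SimpleGraph V) (T : Fin k → SimpleGraph V) : Prop :=
  (∀ i, IsThresholdGraph (T i)) ∧ (⋃ i, (T i).edgeSet) = G.edgeSet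

lemma IsThresholdCover.le {k : ℕ} {G : SimpleGraph V}
    {T : Fin k → SimpleGraph V} (hT : IsThresholdCover G T) (i : Fin k) : T i ≤ G := by
  rw [← SimpleGraph.edgeSet_subset_edgeSet, ← hT.2]
  exact Set.subset_iUnion (fun i => (T i).edgeSet) i

lemma IsThresholdCover.exists_adj {k : ℕ} {G : SimpleGraph V}
    {T : Fin k → SimpleGraph V} (hT : IsThresholdCover G T) {u v : V} (huv : G.Adj u v) :
    ∃ i, (T i).Adj u v := by
  rw [← SimpleGraph.mem_edgeSet, ← hT.2, Set.mem_iUnion] at huv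
  exact huv

end Threshold

lemma Int.two_mul_add_mul_two_mul_sub_neg_iff {x y : ℤ} (hy : |y| ≤ 1) :
    (2 * x + y) * (2 * x - y) < 0 ↔ x = 0 ∧ y ≠ 0 := by
  rw [abs_le] at hy
  constructor
  · intro h
    have hx : x = 0 := by nlinarith
    subst hx
    exact ⟨rfl, by rintro rfl; simp at h⟩
  · rintro ⟨rfl, hy0⟩
    have : 0 < y * y := mul_self_pos.2 hy0
    linarith

namespace matchingGraph

variable {m : ℕ}

/-- The vertex `(a, b)` of `mK₂` is numbered `2a + b`. -/
def pairEquiv (m : ℕ) : Fin m × Bool ≃ Fin (m * 2) :=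
  (Equiv.prodCongr (Equiv.refl _) finTwoEquiv.symm).trans finProdFinEquiv

/-- The involution exchanging `2a` and `2a + 1`. -/
def pairSwap (m : ℕ) : Equiv.Perm (Fin (m * 2)) :=
  (pairEquiv m).permCongr (Equiv.prodCongr (Equiv.refl _) Equiv.boolNot)

lemma pairEquiv_apply_coe (a : Fin m) (b : Bool) :
    ((pairEquiv m (a, b) : ℕ) : ℤ) = 2 * a + b.toNat := by
  cases b <;> simp [pairEquiv, finProdFinEquiv, finTwoEquiv, add_comm, mul_comm]

lemma pairSwap_symm_pairEquiv (a : Fin m) (b : Bool) :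
    (pairSwap m).symm (pairEquiv m (a, b)) = pairEquiv m (a, !b) := by
  simp [pairSwap, Equiv.permCongr_def, Equiv.boolNot]

lemma permGraph_pairSwap_adj (u v : Fin m × Bool) :
    (permGraph (m * 2) (pairSwap m)).Adj (pairEquiv m u) (pairEquiv m v) ↔
      (matchingGraph m).Adj u v := by
  obtain ⟨a, b⟩ := u
  obtain ⟨c, d⟩ := v
  show _ * _ < 0 ↔ a = c ∧ b ≠ d
  simp only [pairSwap_symm_pairEquiv, pairEquiv_apply_coe]
  have hy : |(b.toNat : ℤ) - d.toNat| ≤ 1 := by cases b <;> cases d <;> simp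
  convert Int.two_mul_add_mul_two_mul_sub_neg_iff (x := a - c) hy using 2
  · cases b <;> cases d <;> simp <;> ring
  · rw [sub_eq_zero, Fin.ext_iff, Nat.cast_inj]
  · cases b <;> cases d <;> simp

lemma isPermutationGraph : IsPermutationGraph (matchingGraph m) :=
  ⟨m * 2, pairSwap m, ⟨⟨pairEquiv m, permGraph_pairSwap_adj _ _⟩⟩⟩

lemma isThresholdCover_edge :
    IsThresholdCover (matchingGraph m) fun i => SimpleGraph.edge (i, false) (i, true) := by
  refine ⟨fun i => isThresholdGraph_edge _ _, ?_⟩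
  ext e
  induction e using Sym2.ind with
  | _ a b =>
    simp only [Set.mem_iUnion, SimpleGraph.mem_edgeSet, SimpleGraph.edge_adj]
    obtain ⟨i, _ | _⟩ := a <;> obtain ⟨j, _ | _⟩ := b <;> simp [matchingGraph, eq_comm]

lemma le_of_isThresholdCover {k : ℕ} {T : Fin k → SimpleGraph (Fin m × Bool)}
    (hT : IsThresholdCover (matchingGraph m) T) : m ≤ k := by
  have hadj (j : Fin m) : (matchingGraph m).Adj (j, false) (j, true) := ⟨rfl, by simp⟩
  choose cover hcover using fun j => hT.exists_adj (hadj j)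
  by_contra! hkm
  obtain ⟨j, j', hjj', hsame⟩ := Fintype.exists_ne_map_eq_of_card_lt cover (by simpa using hkm)
  have hj' := hcover j'
  rw [← hsame] at hj'
  rcases (hT.1 (cover j)).adj_or_adj (hcover j) hj' (by simpa using hjj') (by simpa using hjj')
    with h | h <;> exact hjj' (hT.le _ h).1

end matchingGraph

theorem thresholdDim_matching_general
    (m : ℕ) :
    IsPermutationGraph (matchingGraph m) ∧
    (∃ T : Fin m → SimpleGraph (Fin m × Bool),
      (∀ i, IsThresholdGraph (T i)) ∧
      (⋃ i, (T i).edgeSet) = (matchingGraph m).edgeSet) ∧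
    (∀ k : ℕ, k < m →
      ¬ ∃ T : Fin k → SimpleGraph (Fin m × Bool),
        (∀ i, IsThresholdGraph (T i)) ∧
        (⋃ i, (T i).edgeSet) = (matchingGraph m).edgeSet) ∧
    thresholdDim (matchingGraph m) = m := by
  have hcover : ∃ T, IsThresholdCover (matchingGraph m) T :=
    ⟨_, matchingGraph.isThresholdCover_edge⟩
  refine ⟨matchingGraph.isPermutationGraph, hcover,
    fun k hk ⟨T, hT⟩ => hk.not_ge (matchingGraph.le_of_isThresholdCover hT), ?_⟩
  refine le_antisymm (Nat.sInf_le hcover) (le_csInf ⟨m, hcover⟩ ?_)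
  rintro k ⟨T, hT⟩
  exact matchingGraph.le_of_isThresholdCover hT

/-- Example 1: `mK₂` is a permutation graph; its edge set is the union of the edge sets
of `m` threshold graphs but of no fewer, so its threshold dimension is exactly `m`. -/
theorem thresholdDim_matching
    (m : ℕ) (hm : 1 ≤ m) :
    IsPermutationGraph (matchingGraph m) ∧
    (∃ T : Fin m → SimpleGraph (Fin m × Bool),
      (∀ i, IsThresholdGraph (T i)) ∧
      (⋃ i, (T i).edgeSet) = (matchingGraph m).edgeSet) ∧
    (∀ k : ℕ, k < m →
      ¬ ∃ T : Fin k → SimpleGraph (Fin m × Bool),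
        (∀ i, IsThresholdGraph (T i)) ∧
        (⋃ i, (T i).edgeSet) = (matchingGraph m).edgeSet) ∧
    thresholdDim (matchingGraph m) = m :=
  thresholdDim_matching_general m
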